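/- arXiv:math/0201174 — 2 statements merged into one kernel-verified Lean document; each statement's English description precedes it below -/
import Mathlib

section
/- Let M be a simple matroid on a linearly ordered ground set with maximal element n. For every ℓ ≥ 0, the number of NBC sets of M of cardinality ℓ equals the number of NBC sets of M \ n of cardinality ℓ plus the number of NBC sets of M/n of cardinality ℓ - 1. -/
open scoped BigOperators
open scoped Matroid

/-- A circuit: a minimal dependent set. -/
def IsCircuit {n : ℕ} (M : Matroid (Fin n)) (C : Finset (Fin n)) : Prop :=
  M.Dep ↑C ∧ ∀ D : Finset (Fin n), D ⊂ C → ¬ M.Dep ↑D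

/-- A broken circuit: a circuit (of size > 1) with its minimum removed. -/
def IsBrokenCircuit {n : ℕ} (M : Matroid (Fin n)) (B : Finset (Fin n)) : Prop :=
  ∃ (C : Finset (Fin n)) (a : Fin n), IsCircuit M C ∧ 1 < C.card ∧ a ∈ C ∧
    (∀ b ∈ C, a ≤ b) ∧ B = C.erase a

/-- A no-broken-circuit set. -/
def NBCSet {n : ℕ} (M : Matroid (Fin n)) (I : Finset (Fin n)) : Prop :=
  M.Indep ↑I ∧ ∀ B ⊆ I, ¬ IsBrokenCircuit M B

/-- A unidependent set: contains exactly one circuit. -/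
def Unidep {n : ℕ} (M : Matroid (Fin n)) (U : Finset (Fin n)) : Prop :=
  ↑U ⊆ M.E ∧ ∃! C : Finset (Fin n), C ⊆ U ∧ IsCircuit M C

/-- x is a loop. -/
def IsLoopM {n : ℕ} (M : Matroid (Fin n)) (x : Fin n) : Prop := M.Dep {x}

/-- Deletion of a single element. -/
noncomputable def mdel {n : ℕ} (M : Matroid (Fin n)) (x : Fin n) : Matroid (Fin n) :=
  M ↾ (M.E \ {x})

/-- Contraction of a single element, via duality. -/
noncomputable def mcon {n : ℕ} (M : Matroid (Fin n)) (x : Fin n) : Matroid (Fin n) :=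
  (M✶ ↾ (M.E \ {x}))✶

open scoped Classical in
/-- The rank of a finite set: maximal cardinality of an independent subset. -/
noncomputable def rkFin {n : ℕ} (M : Matroid (Fin n)) (U : Finset (Fin n)) : ℕ :=
  (U.powerset.filter fun I : Finset (Fin n) => M.Indep (↑I : Set (Fin n))).sup Finset.card

/-- A simple matroid with ground set everything. -/
def SimpleGround {n : ℕ} (M : Matroid (Fin n)) : Prop :=
  M.E = Set.univ ∧ (∀ i : Fin n, M.Indep {i}) ∧
    ∀ i j : Fin n, i ≠ j → M.Indep {i, j}

/-- Number of inversions of a list. -/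
def listInv {n : ℕ} : List (Fin n) → ℕ
  | [] => 0
  | a :: t => (t.countP fun b => decide (b < a)) + listInv t

/-- χ evaluated on an ordered set, with the sign convention χ(X^σ) = sgn(σ) χ(X). -/
def ochi {n : ℕ} {K : Type*} [Field K] (χ : Finset (Fin n) → K) (l : List (Fin n)) : K :=
  (-1 : K) ^ listInv l * χ l.toFinset

/-- The flag of flats associated to an ordered set: closures of its suffixes. -/
def flagOf {n : ℕ} (M : Matroid (Fin n)) (l : List (Fin n)) : List (Set (Fin n)) :=
  l.tails.map fun t => M.closure ↑t.toFinset

/-- An element `b` is active in `I`: it lies in `cl(I) \ I` and is the minimum of the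
(unique) circuit contained in `I ∪ {b}`. -/
def ActiveIn {n : ℕ} (M : Matroid (Fin n)) (I : Finset (Fin n)) (b : Fin n) : Prop :=
  b ∈ M.closure ↑I ∧ b ∉ I ∧
    ∃ C : Finset (Fin n), C ⊆ insert b I ∧ IsCircuit M C ∧ ∀ c ∈ C, b ≤ c


/-- An inactive unidependent set: `min C(U)` is the minimal active element of
`U \\ min C(U)`. -/
def InactiveUnidep {n : ℕ} (M : Matroid (Fin n)) (U : Finset (Fin n)) : Prop :=
  Unidep M U ∧ ∃ (C : Finset (Fin n)) (a : Fin n), C ⊆ U ∧ IsCircuit M C ∧ a ∈ C ∧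
    (∀ b ∈ C, a ≤ b) ∧ ∀ b : Fin n, ActiveIn M (U.erase a) b → a ≤ b

section Alg

variable {n : ℕ} {K : Type*} [Field K]

/-- The defining relations of the graded algebra `E`: squares of generators vanish and
generators commute up to the nonzero scalars `β i j` (for `i < j`). -/
inductive ERel (n : ℕ) (K : Type*) [Field K] (β : Fin n → Fin n → K) :
    FreeAlgebra K (Fin n) → FreeAlgebra K (Fin n) → Prop
  | sq (i : Fin n) : ERel n K β (FreeAlgebra.ι K i * FreeAlgebra.ι K i) 0
  | comm {i j : Fin n} (h : i < j) :
      ERel n K β (FreeAlgebra.ι K j * FreeAlgebra.ι K i)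
        (β i j • (FreeAlgebra.ι K i * FreeAlgebra.ι K j))

/-- The algebra `E` generated by `e_1, …, e_n` with `e_i² = 0`, `e_j e_i = β i j • e_i e_j`. -/
abbrev EAlg (n : ℕ) (K : Type*) [Field K] (β : Fin n → Fin n → K) := RingQuot (ERel n K β)

/-- The generator `e_i` of `E`. -/
noncomputable def gen (β : Fin n → Fin n → K) (i : Fin n) : EAlg n K β :=
  RingQuot.mkAlgHom K (ERel n K β) (FreeAlgebra.ι K i)

/-- `e_X`: the product of the generators indexed by `X`, in increasing order. -/
noncomputable def eset (β : Fin n → Fin n → K) (X : Finset (Fin n)) : EAlg n K β :=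
  ((X.sort (· ≤ ·)).map (gen β)).prod

/-- The χ-boundary `∂e_X = Σ_p (-1)^p χ(X \ i_p) e_{X \ i_p}` (with `X = {i_1 < … < i_m}`,
`p` running from 1 to m). -/
noncomputable def bdry (β : Fin n → Fin n → K) (χ : Finset (Fin n) → K)
    (X : Finset (Fin n)) : EAlg n K β :=
  (((X.sort (· ≤ ·)).zipIdx.map Prod.swap).map fun pi =>
    ((-1 : K) ^ (pi.1 + 1) * χ (X.erase pi.2)) • eset β (X.erase pi.2)).sum

end Alg

section Chi

variable {n : ℕ} {K : Type*} [Field K]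

/-- Condition (UC1). -/
def UC1 (M : Matroid (Fin n)) (χ : Finset (Fin n) → K) : Prop :=
  ∀ I : Finset (Fin n), χ I ≠ 0 ↔ M.Indep ↑I

/-- Condition (UC2). -/
def UC2 (β : Fin n → Fin n → K) (M : Matroid (Fin n)) (χ : Finset (Fin n) → K) : Prop :=
  ∀ U U' : Finset (Fin n), Unidep M U → Unidep M U' → U' ⊆ U →
    ∃ ε : K, ε ≠ 0 ∧ bdry β χ U = ε • (bdry β χ U' * eset β (U \ U'))

/-- The (right) ideal `I_χ(M)` of `E`, as a `K`-subspace: it is spanned by the products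
of the boundaries of circuits of size `> 1` (and of the generators indexed by loops)
with arbitrary elements of `E`. -/
noncomputable def chiIdeal (β : Fin n → Fin n → K) (M : Matroid (Fin n))
    (χ : Finset (Fin n) → K) : Submodule K (EAlg n K β) :=
  Submodule.span K
    ({ y | ∃ C : Finset (Fin n), IsCircuit M C ∧ 1 < C.card ∧
        ∃ z : EAlg n K β, y = bdry β χ C * z } ∪
     { y | ∃ i : Fin n, IsCircuit M {i} ∧ ∃ z : EAlg n K β, y = gen β i * z })

/-- The χ-algebra `A_χ(M) = E / I_χ(M)` (as a `K`-vector space). -/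
abbrev AChi (β : Fin n → Fin n → K) (M : Matroid (Fin n)) (χ : Finset (Fin n) → K) :=
  EAlg n K β ⧸ chiIdeal β M χ

/-- The residue class `[e_X]` in `A_χ(M)`. -/
noncomputable def cls (β : Fin n → Fin n → K) (M : Matroid (Fin n))
    (χ : Finset (Fin n) → K) (X : Finset (Fin n)) : AChi β M χ :=
  Submodule.Quotient.mk (eset β X)

/-- The induced map `χ_{M/x}`, `I ↦ χ(I * x)`. -/
def chiC (χ : Finset (Fin n) → K) (x : Fin n) : Finset (Fin n) → K :=
  fun I => ochi χ (I.sort (· ≤ ·) ++ [x])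

/-- Iterated single-element contraction along a list (the head is contracted last). -/
noncomputable def contrList (M : Matroid (Fin n)) : List (Fin n) → Matroid (Fin n)
  | [] => M
  | x :: t => mcon (contrList M t) x

/-- Iterated induced `χ` along a list. -/
def chiL (χ : Finset (Fin n) → K) : List (Fin n) → (Finset (Fin n) → K)
  | [] => χ
  | x :: t => chiC (chiL χ t) x

/-- The iterated residue `p_{I^σ} = p_{i_{σ(1)}} ∘ ⋯ ∘ p_{i_{σ(ℓ)}}` associated to a family
`P` of single-element residue maps and an ordered set (a list). -/
noncomputable def pIter (β : Fin n → Fin n → K)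
    (P : ∀ (M : Matroid (Fin n)) (χ : Finset (Fin n) → K) (x : Fin n),
      AChi β M χ →ₗ[K] AChi β (mcon M x) (chiC χ x))
    (M : Matroid (Fin n)) (χ : Finset (Fin n) → K) :
    (l : List (Fin n)) → (AChi β M χ →ₗ[K] AChi β (contrList M l) (chiL χ l))
  | [] => LinearMap.id
  | x :: t => (P (contrList M t) (chiL χ t) x).comp (pIter β P M χ t)

/-- The defining property of the residue map `p_x` on (classes of) independent sets. -/
def ResFormula (β : Fin n → Fin n → K)
    (P : ∀ (M : Matroid (Fin n)) (χ : Finset (Fin n) → K) (x : Fin n),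
      AChi β M χ →ₗ[K] AChi β (mcon M x) (chiC χ x)) : Prop :=
  ∀ (M : Matroid (Fin n)) (χ : Finset (Fin n) → K) (x : Fin n), ¬ IsLoopM M x →
    ∀ I : Finset (Fin n), M.Indep ↑I →
      (x ∈ I → P M χ x (cls β M χ I) = cls β (mcon M x) (chiC χ x) (I.erase x)) ∧
      (∀ y ∈ I, IsCircuit M {x, y} → P M χ x (cls β M χ I) =
        (ochi χ ((I.erase y).sort (· ≤ ·) ++ [x]) /
          ochi χ ((I.erase y).sort (· ≤ ·) ++ [y])) •
            cls β (mcon M x) (chiC χ x) (I.erase y)) ∧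
      (x ∉ I → (∀ y ∈ I, ¬ IsCircuit M {x, y}) → P M χ x (cls β M χ I) = 0)

end Chi

/-!
Split the NBC sets of `M` according to whether they contain the maximal element `x`.
Since `x` is never the minimum of a circuit with at least two elements, a broken circuit
avoiding `x` comes from a circuit avoiding `x`, so the NBC sets without `x` are exactly the NBC
sets of `M ＼ x`. Deleting `x` from an NBC set that contains it gives an NBC set of `M ／ x` and
vice versa: circuits of `M ／ x` are the traces of circuits of `M`, and simplicity rules out
the one-element circuits of `M ／ x`, which would not be broken circuits there.
-/

open Finset

lemma Set.ncard_eq_ncard_notMem_add_ncard_insert {α : Type*} [DecidableEq α] [Finite α]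
    (S : Set (Finset α)) (x : α) :
    S.ncard = {I | I ∈ S ∧ x ∉ I}.ncard + {J | x ∉ J ∧ insert x J ∈ S}.ncard := by
  have himage : insert x '' {J | x ∉ J ∧ insert x J ∈ S} = S \ {I | x ∉ I} := by
    ext I
    constructor
    · rintro ⟨J, ⟨-, hJ⟩, rfl⟩
      exact ⟨hJ, not_not.mpr (mem_insert_self x J)⟩
    · rintro ⟨hI, hxI⟩
      rw [Set.mem_ofPred_eq, not_not] at hxI
      exact ⟨I.erase x, ⟨notMem_erase x I, by rwa [insert_erase hxI]⟩, insert_erase hxI⟩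
  have hinj : Set.InjOn (insert x) {J | x ∉ J ∧ insert x J ∈ S} := fun J hJ K hK h => by
    rw [← erase_insert hJ.1, h, erase_insert hK.1]
  rw [← hinj.ncard_image, himage]
  exact (Set.ncard_inter_add_ncard_sdiff_eq_ncard S _ (Set.toFinite S)).symm

variable {n : ℕ} {M : Matroid (Fin n)} {x a : Fin n} {C C' D I J : Finset (Fin n)}

lemma exists_isCircuit_subset_of_dep (hD : M.Dep ↑D) : ∃ C ⊆ D, IsCircuit M C := by
  induction D using Finset.strongInduction with
  | H D ih =>
    by_cases hmin : ∀ D' ⊂ D, ¬ M.Dep ↑D'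
    · exact ⟨D, subset_rfl, hD, hmin⟩
    · push Not at hmin
      obtain ⟨D', hD'D, hD'⟩ := hmin
      obtain ⟨C, hCD', hC⟩ := ih D' hD'D hD'
      exact ⟨C, hCD'.trans hD'D.subset, hC⟩

lemma IsCircuit.not_subset_of_indep (hC : IsCircuit M C) (hI : M.Indep ↑I) : ¬ C ⊆ I :=
  fun hCI => hC.1.not_indep (hI.subset (coe_subset.mpr hCI))

lemma IsCircuit.eq_of_subset_of_dep (hC' : IsCircuit M C') (hCC' : C ⊆ C') (hC : M.Dep ↑C) :
    C = C' :=
  of_not_not fun hne => hC'.2 C (hCC'.ssubset_of_ne hne) hC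

lemma NBCSet.erase_not_subset (hI : NBCSet M I) (hC : IsCircuit M C)
    (hamin : ∀ b ∈ C, a ≤ b) (hcard : a ∈ C → 1 < C.card) : ¬ C.erase a ⊆ I := by
  by_cases haC : a ∈ C
  · exact fun hCI => hI.2 _ hCI ⟨C, a, hC, hcard haC, haC, hamin, rfl⟩
  · rw [erase_eq_of_notMem haC]
    exact hC.not_subset_of_indep hI.1

lemma ne_of_forall_le_of_one_lt_card (hmax : ∀ y, y ≤ x) (hcard : 1 < C.card)
    (hamin : ∀ b ∈ C, a ≤ b) : a ≠ x := by
  rintro rfl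
  obtain ⟨b, hb, c, hc, hbc⟩ := one_lt_card.mp hcard
  exact hbc (((hmax b).antisymm (hamin b hb)).trans ((hmax c).antisymm (hamin c hc)).symm)

lemma mdel_indep_iff : (mdel M x).Indep ↑I ↔ M.Indep ↑I ∧ x ∉ I := by
  rw [show mdel M x = M ＼ {x} from rfl, Matroid.delete_indep_iff, Set.disjoint_singleton_right,
    mem_coe]

lemma mdel_dep_iff : (mdel M x).Dep ↑D ↔ M.Dep ↑D ∧ x ∉ D := by
  rw [show mdel M x = M ＼ {x} from rfl, Matroid.delete_dep_iff, Set.disjoint_singleton_right,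
    mem_coe]

lemma isCircuit_mdel_iff : IsCircuit (mdel M x) C ↔ IsCircuit M C ∧ x ∉ C := by
  simp only [IsCircuit, mdel_dep_iff]
  constructor
  · rintro ⟨⟨hC, hxC⟩, hmin⟩
    exact ⟨⟨hC, fun D hDC hD => hmin D hDC ⟨hD, fun hxD => hxC (hDC.subset hxD)⟩⟩, hxC⟩
  · rintro ⟨⟨hC, hmin⟩, hxC⟩
    exact ⟨⟨hC, hxC⟩, fun D hDC hD => hmin D hDC hD.1⟩

lemma mcon_indep_iff (hx : M.IsNonloop x) :
    (mcon M x).Indep ↑I ↔ x ∉ I ∧ M.Indep ↑(insert x I) := by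
  rw [coe_insert, ← mem_coe]
  exact hx.contractElem_indep_iff

lemma mcon_dep_iff (hx : M.IsNonloop x) :
    (mcon M x).Dep ↑D ↔ x ∉ D ∧ M.Dep ↑(insert x D) := by
  rw [show mcon M x = M ／ {x} from rfl, hx.indep.contract_dep_iff,
    Set.disjoint_singleton_right, Set.union_singleton, mem_coe, coe_insert]

lemma mcon_dep_erase (hx : M.IsNonloop x) (hD : M.Dep ↑D) : (mcon M x).Dep ↑(D.erase x) := by
  refine (mcon_dep_iff hx).mpr ⟨notMem_erase x D, hD.superset ?_ ?_⟩
  · exact_mod_cast insert_erase_subset x D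
  · rw [coe_insert]
    exact Set.insert_subset hx.mem_ground
      ((coe_subset.mpr (erase_subset x D)).trans hD.subset_ground)

lemma one_lt_card_of_isCircuit_mcon (hx : M.IsNonloop x)
    (hpar : ∀ y ∈ M.E, y ≠ x → M.Indep {x, y}) (hC : IsCircuit (mcon M x) C) : 1 < C.card := by
  obtain ⟨hxC, hdep⟩ := (mcon_dep_iff hx).mp hC.1
  obtain ⟨a, haC⟩ : C.Nonempty := by simpa using hC.1.nonempty
  by_contra! hle
  have hCa : C = {a} :=
    eq_singleton_iff_unique_mem.mpr ⟨haC, fun b hb => card_le_one.mp hle b hb a haC⟩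
  rw [hCa] at hxC hdep
  refine hdep.not_indep ?_
  rw [coe_insert, coe_singleton]
  exact hpar a (hdep.subset_ground (by simp)) (by simpa [eq_comm] using hxC)

lemma nbcSet_mdel_iff (hmax : ∀ y, y ≤ x) : NBCSet (mdel M x) I ↔ x ∉ I ∧ NBCSet M I := by
  rw [NBCSet, mdel_indep_iff]
  constructor
  · rintro ⟨⟨hI, hxI⟩, hnbc⟩
    refine ⟨hxI, hI, fun B hBI ⟨C, a, hC, hcard, haC, hamin, hB⟩ => hnbc B hBI
      ⟨C, a, isCircuit_mdel_iff.mpr ⟨hC, fun hxC => hxI (hBI ?_)⟩, hcard, haC, hamin, hB⟩⟩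
    exact hB ▸ mem_erase.mpr ⟨(ne_of_forall_le_of_one_lt_card hmax hcard hamin).symm, hxC⟩
  · rintro ⟨hxI, hI, hnbc⟩
    exact ⟨⟨hI, hxI⟩, fun B hBI ⟨C, a, hC, hB⟩ =>
      hnbc B hBI ⟨C, a, (isCircuit_mdel_iff.mp hC).1, hB⟩⟩

lemma NBCSet.insert_of_mcon (hx : M.IsNonloop x) (hpar : ∀ y ∈ M.E, y ≠ x → M.Indep {x, y})
    (hJ : NBCSet (mcon M x) J) : NBCSet M (insert x J) := by
  refine ⟨((mcon_indep_iff hx).mp hJ.1).2, fun B hBJ ⟨C, a, hC, _, _, hamin, hB⟩ => ?_⟩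
  subst hB
  obtain ⟨C', hC'C, hC'⟩ := exists_isCircuit_subset_of_dep (mcon_dep_erase hx hC.1)
  refine hJ.erase_not_subset (a := a) hC' (fun b hb => hamin b (mem_of_mem_erase (hC'C hb)))
    (fun _ => one_lt_card_of_isCircuit_mcon hx hpar hC') fun c hc => ?_
  obtain ⟨hca, hcC'⟩ := mem_erase.mp hc
  obtain ⟨hcx, hcC⟩ := mem_erase.mp (hC'C hcC')
  exact (mem_insert.mp (hBJ (mem_erase.mpr ⟨hca, hcC⟩))).resolve_left hcx

lemma NBCSet.mcon_of_insert (hx : M.IsNonloop x) (hmax : ∀ y, y ≤ x) (hxJ : x ∉ J)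
    (hJ : NBCSet M (insert x J)) : NBCSet (mcon M x) J := by
  refine ⟨(mcon_indep_iff hx).mpr ⟨hxJ, hJ.1⟩,
    fun B hBJ ⟨C', a, hC', hcard, haC', hamin, hB⟩ => ?_⟩
  subst hB
  obtain ⟨hxC', hdep⟩ := (mcon_dep_iff hx).mp hC'.1
  obtain ⟨C, hCC', hC⟩ := exists_isCircuit_subset_of_dep hdep
  by_cases hxC : x ∈ C
  · refine hJ.erase_not_subset hC ?_
      (fun haC => one_lt_card.mpr ⟨x, hxC, a, haC, fun h => hxC' (h ▸ haC')⟩) fun c hc => ?_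
    · intro b hb
      rcases mem_insert.mp (hCC' hb) with rfl | hb
      exacts [hmax a, hamin b hb]
    · obtain ⟨hca, hcC⟩ := mem_erase.mp hc
      rcases mem_insert.mp (hCC' hcC) with rfl | hcC'
      exacts [mem_insert_self _ _, mem_insert_of_mem (hBJ (mem_erase.mpr ⟨hca, hcC'⟩))]
  · have hCC'' : C ⊆ C' := fun c hc =>
      (mem_insert.mp (hCC' hc)).resolve_left (ne_of_mem_of_not_mem hc hxC)
    have hCdep : (mcon M x).Dep ↑C := erase_eq_of_notMem hxC ▸ mcon_dep_erase hx hC.1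
    rw [hC'.eq_of_subset_of_dep hCC'' hCdep] at hC
    exact hJ.2 _ (hBJ.trans (subset_insert x J)) ⟨C', a, hC, hcard, haC', hamin, rfl⟩

lemma nbcSet_mcon_iff (hx : M.IsNonloop x) (hpar : ∀ y ∈ M.E, y ≠ x → M.Indep {x, y})
    (hmax : ∀ y, y ≤ x) : NBCSet (mcon M x) J ↔ x ∉ J ∧ NBCSet M (insert x J) :=
  ⟨fun hJ => ⟨((mcon_indep_iff hx).mp hJ.1).1, hJ.insert_of_mcon hx hpar⟩,
    fun ⟨hxJ, hJ⟩ => hJ.mcon_of_insert hx hmax hxJ⟩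

/-- `#NBC_ℓ(M) = #NBC_ℓ(M\x) + #NBC_{ℓ-1}(M/x)` for the maximal element `x`
of a simple matroid. -/
theorem nbc_count {n : ℕ} (M : Matroid (Fin n)) (hM : SimpleGround M) (x : Fin n)
    (hmax : ∀ y : Fin n, y ≤ x) (ℓ : ℕ) :
    {I : Finset (Fin n) | NBCSet M I ∧ I.card = ℓ}.ncard =
      {I : Finset (Fin n) | NBCSet (mdel M x) I ∧ I.card = ℓ}.ncard +
      {I : Finset (Fin n) | NBCSet (mcon M x) I ∧ I.card + 1 = ℓ}.ncard := by
  have hx : M.IsNonloop x := Matroid.indep_singleton.mp (hM.2.1 x)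
  have hpar : ∀ y ∈ M.E, y ≠ x → M.Indep {x, y} := fun y _ hyx => hM.2.2 x y hyx.symm
  rw [Set.ncard_eq_ncard_notMem_add_ncard_insert _ x]
  congr 2 <;> ext I <;> simp only [Set.mem_ofPred_eq]
  · rw [nbcSet_mdel_iff hmax]
    tauto
  · rw [nbcSet_mcon_iff hx hpar hmax]
    constructor
    · rintro ⟨hxI, hI, hcard⟩
      exact ⟨⟨hxI, hI⟩, by rwa [← card_insert_of_notMem hxI]⟩
    · rintro ⟨⟨hxI, hI⟩, hcard⟩
      exact ⟨hxI, hI, by rwa [card_insert_of_notMem hxI]⟩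
end

section
/- In a χ-algebra A_χ(M), for X ⊆ [n], the residue class [e_X] is nonzero if and only if X is an independent set of M. -/
open scoped BigOperators
open scoped Matroid

/-!
A dependent `X` contains a circuit `C`. If `C = {i}` is a loop, `e_X` is a nonzero multiple of
`e_i e_{X \ i}`; otherwise `∂e_C e_a` is a nonzero multiple of `e_C` for `a ∈ C`, so `e_X` is a
nonzero multiple of `∂e_C e_a e_{X \ C}`. Either way `e_X ∈ I_χ(M)`.

For an independent `X = {x_1 < ⋯ < x_k}`, let `F_j = cl {x_1, …, x_j}` and call `T` a transversal
of this flag if it has exactly one element in each `F_j \ F_{j-1}`. The linear form on `E` sending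
`e_T` to `(-1)^inv(T) χ(T)⁻¹` on transversals (`inv(T)` counts the pairs of `T` that the flag puts
in the opposite order) and to `0` otherwise is nonzero on `e_X`. It is read off the representation
of `E` on the coordinates with respect to the monomials `e_S`; as these span `E`, it kills
`I_χ(M)` once it kills every `∂e_C e_S`. By (UC2) such a product is either a multiple of `∂e_U`,
`U = C ∪ S`, or a combination of `e_T` with `T` dependent. At most two of the sets `U \ i` are
transversals, namely for the two elements of `U` in the same layer, and their terms in `∂e_U`
cancel by a parity count of inversions.
-/

open Finset

lemma List.sum_map_zipIdx_eq_sum_card_lt {α M : Type*} [LinearOrder α] [AddCommMonoid M]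
    (g : ℕ → α → M) : ∀ (l : List α) (k : ℕ), l.Pairwise (· < ·) →
      ((l.zipIdx k).map fun p => g p.2 p.1).sum =
        ∑ i ∈ l.toFinset, g (k + #{j ∈ l.toFinset | j < i}) i
  | [], _, _ => by simp
  | a :: t, k, hl => by
    rw [List.pairwise_cons] at hl
    have hat : a ∉ t.toFinset := fun h => lt_irrefl a (hl.1 a (List.mem_toFinset.mp h))
    rw [List.zipIdx_cons, List.map_cons, List.sum_cons,
      List.sum_map_zipIdx_eq_sum_card_lt g t (k + 1) hl.2, List.toFinset_cons, sum_insert hat]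
    congr 1
    · rw [filter_insert, if_neg (lt_irrefl a), filter_false_of_mem fun j hj =>
        (hl.1 j (List.mem_toFinset.mp hj)).not_gt]
      simp
    · refine sum_congr rfl fun i hi => ?_
      rw [filter_insert, if_pos (hl.1 i (List.mem_toFinset.mp hi)),
        card_insert_of_notMem fun h => hat (mem_filter.mp h).1]
      ring_nf

theorem Matroid.indep_of_forall_notMem_closure {α β : Type*} [LinearOrder β] {M : Matroid α}
    {f : α → β} {T : Finset α} (hf : Set.InjOn f T)
    (hT : ∀ t ∈ T, t ∈ M.E ∧ t ∉ M.closure ↑{s ∈ T | f s < f t}) : M.Indep ↑T := by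
  classical
  suffices ∀ S ⊆ T, M.Indep ↑S from this T subset_rfl
  intro S
  induction S using Finset.induction_on_max_value f with
  | empty => simp
  | insert a S haS hmax ih =>
    intro hST
    have haT := hST (mem_insert_self a S)
    rw [coe_insert, (ih ((subset_insert a S).trans hST)).insert_indep_iff_of_notMem
      (by exact_mod_cast haS)]
    refine ⟨(hT a haT).1, fun hcl => (hT a haT).2 (M.closure_subset_closure ?_ hcl)⟩
    intro s hs
    have hsT := hST (mem_insert_of_mem hs)
    exact mem_filter.mpr ⟨hsT, (hmax s hs).lt_of_ne fun h => haS (hf hsT haT h ▸ hs)⟩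

section Inversions

variable {α β : Type*} [LinearOrder α] [LinearOrder β]

def inversions (f : α → β) (T : Finset α) : ℕ :=
  ∑ s ∈ T, #{t ∈ T | s < t ∧ f t < f s}

lemma inversions_insert (f : α → β) {a : α} {T : Finset α} (ha : a ∉ T) :
    inversions f (insert a T) =
      inversions f T + #{t ∈ T | a < t ∧ f t < f a} + #{t ∈ T | t < a ∧ f a < f t} := by
  simp only [inversions, card_filter, sum_insert ha, lt_irrefl, false_and, if_false, zero_add,
    sum_add_distrib]
  ring

/-- With `f a = f b`, both `[w < a]` plus the crossings of `w` with `a` and `[w < b]` plus the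
crossings of `w` with `b` are `≡ [f w < f a] (mod 2)`. -/
lemma even_crossings {a b w : α} (f : α → β) (hf : f a = f b) (hwa : w ≠ a) (hwb : w ≠ b)
    (hfw : f w ≠ f a) :
    Even ((if w < a then 1 else 0) + (if a < w ∧ f w < f a then 1 else 0) +
      (if w < a ∧ f a < f w then 1 else 0) + (if w < b then 1 else 0) +
      (if b < w ∧ f w < f b then 1 else 0) + (if w < b ∧ f b < f w then 1 else 0)) := by
  rw [← hf]
  rcases lt_or_gt_of_ne hwa with h1 | h1 <;> rcases lt_or_gt_of_ne hwb with h2 | h2 <;>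
    rcases lt_or_gt_of_ne hfw with h3 | h3 <;>
    simp [h1, h2, h3, h1.not_gt, h2.not_gt, h3.not_gt, Nat.even_iff]

lemma neg_one_pow_inversions_erase {R : Type*} [Ring R] (f : α → β) {U : Finset α} {a b : α}
    (ha : a ∈ U) (hb : b ∈ U) (hab : a ≠ b) (hf : f a = f b)
    (hU : ∀ w ∈ U, w ≠ a → w ≠ b → f w ≠ f a) :
    (-1 : R) ^ (#{w ∈ U | w < a} + inversions f (U.erase a)) =
      -(-1) ^ (#{w ∈ U | w < b} + inversions f (U.erase b)) := by
  set W := (U.erase a).erase b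
  have hbW : b ∉ W := notMem_erase b _
  have haW : a ∉ W := by simp [W]
  have hUa : U.erase a = insert b W := (insert_erase (mem_erase.mpr ⟨hab.symm, hb⟩)).symm
  have hUb : U.erase b = insert a W := by
    rw [show W = (U.erase b).erase a from erase_right_comm]
    exact (insert_erase (mem_erase.mpr ⟨hab, ha⟩)).symm
  have hU' : U = insert a (insert b W) := by rw [← hUa, insert_erase ha]
  have hodd : Odd ((#{w ∈ U | w < a} + inversions f (U.erase a)) +
      (#{w ∈ U | w < b} + inversions f (U.erase b))) := by
    rw [hUa, hUb, inversions_insert f hbW, inversions_insert f haW, hU']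
    simp only [card_filter, sum_insert (mem_insert.not.mpr (not_or.mpr ⟨hab, haW⟩)),
      sum_insert hbW, lt_irrefl, if_false]
    have hW := even_sum (s := W) _ fun w hw => even_crossings f hf (ne_of_mem_of_not_mem hw haW)
      (ne_of_mem_of_not_mem hw hbW) (hU w (mem_of_mem_erase (mem_of_mem_erase hw))
        (ne_of_mem_of_not_mem hw haW) (ne_of_mem_of_not_mem hw hbW))
    simp only [sum_add_distrib] at hW
    have hab' : ((if b < a then 1 else 0) + if a < b then 1 else 0) = 1 := by
      rcases lt_or_gt_of_ne hab with h | h <;> simp [h, h.not_gt]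
    obtain ⟨k, hk⟩ := hW
    rw [Nat.odd_iff]
    omega
  rcases Nat.even_or_odd (#{w ∈ U | w < b} + inversions f (U.erase b)) with hB | hB
  · rw [((Nat.odd_add.mp hodd).mpr hB).neg_one_pow, hB.neg_one_pow]
  · rw [((Nat.odd_add'.mp hodd).mp hB).neg_one_pow, hB.neg_one_pow, neg_neg]

end Inversions

section Exterior

variable {n : ℕ} {K : Type*} [Field K] (β : Fin n → Fin n → K)

lemma gen_mul_self (i : Fin n) : gen β i * gen β i = 0 := by
  rw [gen, ← map_mul, RingQuot.mkAlgHom_rel K (ERel.sq i), map_zero]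

lemma gen_mul_gen_of_lt {i j : Fin n} (h : i < j) :
    gen β j * gen β i = β i j • (gen β i * gen β j) := by
  rw [gen, gen, ← map_mul, RingQuot.mkAlgHom_rel K (ERel.comm h), map_smul, map_mul]

lemma eset_empty : eset β ∅ = 1 := by
  simp [eset]

lemma eset_singleton (i : Fin n) : eset β {i} = gen β i := by
  simp [eset]

lemma eset_insert_of_forall_lt {a : Fin n} {S : Finset (Fin n)} (h : ∀ x ∈ S, a < x) :
    eset β (insert a S) = gen β a * eset β S := by
  rw [eset, sort_insert _ (fun x hx => (h x hx).le) (fun ha => lt_irrefl a (h a ha))]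
  simp [eset]

/-- The scalar picked up by `e_a` when it moves to its place in the ordered product `e_S`. -/
noncomputable def moveCoeff (a : Fin n) (S : Finset (Fin n)) : K :=
  ∏ s ∈ S with s < a, β s a

lemma moveCoeff_insert_of_lt {a m : Fin n} {S : Finset (Fin n)} (hm : m < a) (hmS : m ∉ S) :
    moveCoeff β a (insert m S) = β m a * moveCoeff β a S := by
  rw [moveCoeff, filter_insert, if_pos hm, prod_insert (by simp [hmS]), moveCoeff]

lemma moveCoeff_insert_of_not_lt {a m : Fin n} {S : Finset (Fin n)} (hm : ¬ m < a) :
    moveCoeff β a (insert m S) = moveCoeff β a S := by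
  rw [moveCoeff, filter_insert, if_neg hm, moveCoeff]

lemma moveCoeff_of_forall_lt {a : Fin n} {S : Finset (Fin n)} (h : ∀ x ∈ S, a < x) :
    moveCoeff β a S = 1 := by
  rw [moveCoeff, filter_false_of_mem (fun x hx => (h x hx).not_gt), prod_empty]

lemma moveCoeff_ne_zero (hβ : ∀ i j : Fin n, i < j → β i j ≠ 0) (a : Fin n)
    (S : Finset (Fin n)) : moveCoeff β a S ≠ 0 :=
  prod_ne_zero_iff.mpr fun s hs => hβ s a (mem_filter.mp hs).2

lemma gen_mul_eset (a : Fin n) (S : Finset (Fin n)) :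
    gen β a * eset β S = if a ∈ S then 0 else moveCoeff β a S • eset β (insert a S) := by
  induction S using Finset.induction_on_min generalizing a with
  | empty => simp [moveCoeff, eset_empty, eset_singleton]
  | insert m S hm ih =>
    have hmS : m ∉ S := fun h => lt_irrefl m (hm m h)
    rw [eset_insert_of_forall_lt β hm]
    rcases lt_trichotomy a m with ham | rfl | hma
    · have hlt : ∀ x ∈ insert m S, a < x := by
        simpa [ham] using fun x hx => ham.trans (hm x hx)
      rw [if_neg fun h => (hlt a h).false, moveCoeff_of_forall_lt β hlt, one_smul,
        eset_insert_of_forall_lt β hlt, eset_insert_of_forall_lt β hm]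
    · rw [← mul_assoc, gen_mul_self, zero_mul, if_pos (mem_insert_self _ _)]
    · rw [← mul_assoc, gen_mul_gen_of_lt β hma, smul_mul_assoc, mul_assoc, ih]
      by_cases haS : a ∈ S
      · simp [haS]
      · have hlt : ∀ x ∈ insert a S, m < x := by simpa [hma] using hm
        rw [if_neg haS, if_neg (by simp [hma.ne', haS]), mul_smul_comm, smul_smul,
          ← eset_insert_of_forall_lt β hlt, insert_comm, moveCoeff_insert_of_lt β hma hmS]

variable {β} in
lemma eset_mul_eset (hβ : ∀ i j : Fin n, i < j → β i j ≠ 0) (A B : Finset (Fin n)) :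
    ∃ c : K, (c ≠ 0 ↔ Disjoint A B) ∧ eset β A * eset β B = c • eset β (A ∪ B) := by
  induction A using Finset.induction_on_min with
  | empty => exact ⟨1, by simp, by simp [eset_empty]⟩
  | insert m A hm ih =>
    obtain ⟨c, hc, hAB⟩ := ih
    have hmA : m ∉ A := fun h => lt_irrefl m (hm m h)
    rw [eset_insert_of_forall_lt β hm, mul_assoc, hAB, mul_smul_comm, gen_mul_eset]
    by_cases hmB : m ∈ B
    · refine ⟨0, ?_, by simp [hmB]⟩
      simpa using fun h => disjoint_left.mp h (mem_insert_self m A) hmB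
    · refine ⟨c * moveCoeff β m (A ∪ B), ?_, ?_⟩
      · simp [hc, moveCoeff_ne_zero β hβ, hmB]
      · rw [if_neg (by simp [hmA, hmB]), smul_smul, insert_union]

lemma span_range_eset : Submodule.span K (Set.range (eset β)) = ⊤ := by
  set V := Submodule.span K (Set.range (eset β))
  have hgen : ∀ a, ∀ v ∈ V, gen β a * v ∈ V := fun a v hv => by
    induction hv using Submodule.span_induction with
    | mem _ h =>
      obtain ⟨S, rfl⟩ := h
      rw [gen_mul_eset]
      split_ifs
      exacts [V.zero_mem, V.smul_mem _ (Submodule.subset_span ⟨_, rfl⟩)]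
    | zero => simp
    | add _ _ _ _ hx hy => rw [mul_add]; exact V.add_mem hx hy
    | smul c _ _ hx => rw [mul_smul_comm]; exact V.smul_mem c hx
  have hmul : ∀ z, ∀ v ∈ V, z * v ∈ V := by
    intro z
    obtain ⟨w, rfl⟩ := RingQuot.mkAlgHom_surjective K (ERel n K β) z
    induction w using FreeAlgebra.induction with
    | grade0 r =>
      intro v hv
      rw [AlgHom.commutes, Algebra.algebraMap_eq_smul_one, smul_mul_assoc, one_mul]
      exact V.smul_mem r hv
    | grade1 a => exact hgen a
    | mul x y hx hy => intro v hv; rw [map_mul, mul_assoc]; exact hx _ (hy v hv)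
    | add x y hx hy => intro v hv; rw [map_add, add_mul]; exact V.add_mem (hx v hv) (hy v hv)
  refine eq_top_iff.mpr fun z _ => ?_
  simpa using hmul z 1 (Submodule.subset_span ⟨∅, eset_empty β⟩)

lemma map_mul_eq_zero_of_forall_eset {V : Type*} [AddCommGroup V] [Module K V]
    (φ : EAlg n K β →ₗ[K] V) {y : EAlg n K β} (h : ∀ S, φ (y * eset β S) = 0)
    (z : EAlg n K β) : φ (y * z) = 0 :=
  LinearMap.congr_fun (LinearMap.ext_on_range (f := φ ∘ₗ LinearMap.mulLeft K y) (g := 0)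
    (span_range_eset β) h) z

variable {β} in
lemma bdry_eq_sum (χ : Finset (Fin n) → K) (X : Finset (Fin n)) :
    bdry β χ X = ∑ i ∈ X, ((-1) ^ (#{j ∈ X | j < i} + 1) * χ (X.erase i)) • eset β (X.erase i) := by
  have := List.sum_map_zipIdx_eq_sum_card_lt
    (fun p i => ((-1 : K) ^ (p + 1) * χ (X.erase i)) • eset β (X.erase i)) _ 0
    (sortedLT_sort X).pairwise
  simp only [sort_toFinset, zero_add] at this
  rw [bdry, List.map_map]
  exact this

end Exterior

section Coordinates

variable {n : ℕ} {K : Type*} [Field K] (β : Fin n → Fin n → K)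

/-- `e_a` acting on the coordinates with respect to the monomials `e_S`, by `gen_mul_eset`. -/
noncomputable def genAction (a : Fin n) : Module.End K (Finset (Fin n) →₀ K) :=
  Finsupp.linearCombination K fun S =>
    if a ∈ S then 0 else Finsupp.single (insert a S) (moveCoeff β a S)

lemma genAction_single (a : Fin n) (S : Finset (Fin n)) (c : K) :
    genAction β a (Finsupp.single S c) =
      if a ∈ S then 0 else Finsupp.single (insert a S) (c * moveCoeff β a S) := by
  rw [genAction, Finsupp.linearCombination_single]
  split_ifs <;> simp

lemma genAction_mul_self (a : Fin n) : genAction β a * genAction β a = 0 := by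
  refine Finsupp.lhom_ext fun S c => ?_
  by_cases ha : a ∈ S <;>
    simp only [Module.End.mul_apply, genAction_single, ha, mem_insert_self, if_true, if_false,
      map_zero, LinearMap.zero_apply]

lemma genAction_mul_genAction_of_lt {i j : Fin n} (h : i < j) :
    genAction β j * genAction β i = β i j • (genAction β i * genAction β j) := by
  refine Finsupp.lhom_ext fun S c => ?_
  by_cases hi : i ∈ S <;> by_cases hj : j ∈ S <;>
    simp only [Module.End.mul_apply, LinearMap.smul_apply, genAction_single, hi, hj, mem_insert,
      h.ne, h.ne', or_self, or_true, if_true, if_false, map_zero, smul_zero]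
  rw [moveCoeff_insert_of_lt β h hi, moveCoeff_insert_of_not_lt β h.not_gt, insert_comm,
    Finsupp.smul_single, smul_eq_mul]
  ring_nf

noncomputable def coordRep : EAlg n K β →ₐ[K] Module.End K (Finset (Fin n) →₀ K) :=
  RingQuot.liftAlgHom K ⟨FreeAlgebra.lift K (genAction β), fun x y h => by
    induction h with
    | sq i => simp [genAction_mul_self]
    | comm h => simp [genAction_mul_genAction_of_lt β h]⟩

lemma coordRep_gen (a : Fin n) : coordRep β (gen β a) = genAction β a := by
  rw [gen, coordRep, RingQuot.liftAlgHom_mkAlgHom_apply, FreeAlgebra.lift_ι_apply]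

lemma coordRep_eset (S : Finset (Fin n)) :
    coordRep β (eset β S) (Finsupp.single ∅ 1) = Finsupp.single S 1 := by
  induction S using Finset.induction_on_min with
  | empty => simp [eset_empty]
  | insert m S hm ih =>
    rw [eset_insert_of_forall_lt β hm, map_mul, Module.End.mul_apply, ih, coordRep_gen,
      genAction_single, if_neg fun h => lt_irrefl m (hm m h), moveCoeff_of_forall_lt β hm, one_mul]

end Coordinates

section Circuits

variable {n : ℕ} {M : Matroid (Fin n)}

lemma isCircuit_iff_isCircuit_coe {C : Finset (Fin n)} : IsCircuit M C ↔ M.IsCircuit ↑C := by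
  rw [Matroid.isCircuit_iff_forall_ssubset]
  refine ⟨fun ⟨hC, hmin⟩ => ⟨hC, fun I hI => ?_⟩, fun ⟨hC, hmin⟩ => ⟨hC, fun D hD => ?_⟩⟩
  · lift I to Finset (Fin n) using C.finite_toSet.subset hI.subset
    exact (M.not_dep_iff (hI.subset.trans hC.subset_ground)).mp (hmin I (by exact_mod_cast hI))
  · exact (hmin (by exact_mod_cast hD)).not_dep

lemma exists_isCircuit_subset (hE : M.E = Set.univ) {X : Finset (Fin n)}
    (hX : ¬ M.Indep ↑X) : ∃ C ⊆ X, IsCircuit M C := by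
  obtain ⟨C, hCX, hC⟩ := ((M.not_indep_iff (by simp [hE])).mp hX).exists_isCircuit_subset
  lift C to Finset (Fin n) using X.finite_toSet.subset hCX
  exact ⟨C, by exact_mod_cast hCX, isCircuit_iff_isCircuit_coe.mpr hC⟩

lemma IsCircuit.unidep {C : Finset (Fin n)} (hC : IsCircuit M C) : Unidep M C := by
  refine ⟨hC.1.subset_ground, C, ⟨subset_rfl, hC⟩, fun C' ⟨hC'C, hC'⟩ => ?_⟩
  exact_mod_cast (isCircuit_iff_isCircuit_coe.mp hC').eq_of_subset_isCircuit
    (isCircuit_iff_isCircuit_coe.mp hC) (by exact_mod_cast hC'C)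

lemma unidep_of_indep_erase {U C : Finset (Fin n)} {i : Fin n} (hU : ↑U ⊆ M.E)
    (hC : IsCircuit M C) (hCU : C ⊆ U) (hI : M.Indep ↑(U.erase i)) : Unidep M U := by
  have hfund : ∀ D ⊆ U, IsCircuit M D → (D : Set (Fin n)) = M.fundCircuit i ↑(U.erase i) :=
    fun D hDU hD => (isCircuit_iff_isCircuit_coe.mp hD).eq_fundCircuit_of_subset hI <| by
      rw [coe_erase, Set.insert_sdiff_singleton]
      exact (coe_subset.mpr hDU).trans (Set.subset_insert _ _)
  exact ⟨hU, C, ⟨hCU, hC⟩, fun C' ⟨hC'U, hC'⟩ =>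
    by exact_mod_cast (hfund C' hC'U hC').trans (hfund C hCU hC).symm⟩

lemma IsCircuit.not_indep_of_subset {C T : Finset (Fin n)}
    (hC : IsCircuit M C) (hCT : C ⊆ T) : ¬ M.Indep ↑T :=
  fun hT => hC.1.not_indep (hT.subset (coe_subset.mpr hCT))

lemma IsCircuit.indep_erase {C : Finset (Fin n)}
    (hC : IsCircuit M C) {a : Fin n} (ha : a ∈ C) : M.Indep ↑(C.erase a) := by
  simpa using (isCircuit_iff_isCircuit_coe.mp hC).sdiff_singleton_indep (mem_coe.mpr ha)

end Circuits

section Flag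

variable {n : ℕ} (M : Matroid (Fin n)) (X : Finset (Fin n))

def flagFlat (j : ℕ) : Set (Fin n) :=
  M.closure ↑{x ∈ X | #{y ∈ X | y < x} < j}

/-- Since `sInf ∅ = 0`, elements outside `M.closure X` get layer `0`, as loops do. -/
noncomputable def layer (t : Fin n) : ℕ :=
  sInf {j | t ∈ flagFlat M X j}

def IsFlagTransversal (T : Finset (Fin n)) : Prop :=
  #T = #X ∧ T.image (layer M X) = Icc 1 #X

variable {M X}

lemma flagFlat_mono {j j' : ℕ} (h : j ≤ j') : flagFlat M X j ⊆ flagFlat M X j' :=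
  M.closure_subset_closure <| coe_subset.mpr <| monotone_filter_right X fun _ _ hx => hx.trans_le h

lemma flagFlat_zero : flagFlat M X 0 = M.closure ∅ := by
  simp [flagFlat]

lemma flagFlat_card : flagFlat M X #X = M.closure ↑X := by
  rw [flagFlat, filter_true_of_mem fun x hx => card_lt_card (filter_ssubset.mpr ⟨x, hx, by simp⟩)]

lemma layer_le {t : Fin n} {j : ℕ} (h : t ∈ flagFlat M X j) : layer M X t ≤ j :=
  Nat.sInf_le h

lemma notMem_flagFlat_of_lt_layer {t : Fin n} {j : ℕ} (h : j < layer M X t) :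
    t ∉ flagFlat M X j :=
  Nat.notMem_of_lt_sInf h

lemma mem_flagFlat_layer {t : Fin n} (h : t ∈ M.closure ↑X) : t ∈ flagFlat M X (layer M X t) :=
  Nat.sInf_mem (s := {j | t ∈ flagFlat M X j}) ⟨#X, by rwa [Set.mem_ofPred_eq, flagFlat_card]⟩

lemma mem_flagFlat_layer_of_pos {t : Fin n} (h : 0 < layer M X t) :
    t ∈ flagFlat M X (layer M X t) :=
  Nat.sInf_mem (Nat.nonempty_of_pos_sInf h)

lemma layer_mem_Icc_of_mem_closure {t : Fin n} (ht : t ∈ M.closure ↑X) (hloop : t ∉ M.closure ∅) :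
    layer M X t ∈ Icc 1 #X := by
  refine mem_Icc.mpr
    ⟨Nat.one_le_iff_ne_zero.mpr fun h0 => hloop ?_, layer_le (by rwa [flagFlat_card])⟩
  simpa [h0, flagFlat_zero] using mem_flagFlat_layer ht

lemma layer_eq_of_mem (hX : M.Indep ↑X) {x : Fin n} (hx : x ∈ X) :
    layer M X x = #{y ∈ X | y < x} + 1 := by
  refine le_antisymm (layer_le (M.mem_closure_of_mem (by simpa using hx) ?_)) ?_
  · exact (coe_subset.mpr (filter_subset _ X)).trans hX.subset_ground
  · by_contra! hlt
    refine hX.notMem_closure_sdiff_of_mem (by simpa using hx) ?_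
    refine M.closure_subset_closure ?_ (flagFlat_mono (Nat.le_of_lt_succ hlt)
      (mem_flagFlat_layer (M.mem_closure_of_mem (by simpa using hx) hX.subset_ground)))
    intro y hy
    simp only [coe_filter, Set.mem_ofPred_eq] at hy
    exact ⟨hy.1, fun h => (Set.mem_singleton_iff.mp h ▸ hy.2).false⟩

lemma isFlagTransversal_self (hX : M.Indep ↑X) : IsFlagTransversal M X X := by
  have hmono : StrictMonoOn (fun x => #{y ∈ X | y < x}) ↑X := fun x hx x' _ hxx' =>
    card_lt_card <| ssubset_iff_of_subset (monotone_filter_right X fun _ _ h => h.trans hxx')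
      |>.mpr ⟨x, by simp [mem_coe.mp hx, hxx'], by simp⟩
  refine ⟨rfl, eq_of_subset_of_card_le (fun k hk => ?_) ?_⟩
  · obtain ⟨x, hx, rfl⟩ := mem_image.mp hk
    rw [layer_eq_of_mem hX hx, mem_Icc]
    exact ⟨by omega, card_lt_card (filter_ssubset.mpr ⟨x, hx, by simp⟩)⟩
  · rw [Nat.card_Icc, add_tsub_cancel_right, card_image_of_injOn]
    intro x hx x' hx' h
    simp only [layer_eq_of_mem hX hx, layer_eq_of_mem hX hx', add_left_inj] at h
    exact hmono.injOn hx hx' h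

namespace IsFlagTransversal

variable {T : Finset (Fin n)} (hT : IsFlagTransversal M X T)
include hT

lemma layer_mem_Icc {t : Fin n} (ht : t ∈ T) : layer M X t ∈ Icc 1 #X :=
  hT.2 ▸ mem_image_of_mem _ ht

lemma injOn : Set.InjOn (layer M X) ↑T :=
  card_image_iff.mp (by rw [hT.2, Nat.card_Icc, add_tsub_cancel_right, hT.1])

lemma subset_closure : ↑T ⊆ M.closure ↑X := fun _ ht =>
  flagFlat_card (M := M) ▸ flagFlat_mono (mem_Icc.mp (hT.layer_mem_Icc ht)).2
    (mem_flagFlat_layer_of_pos (mem_Icc.mp (hT.layer_mem_Icc ht)).1)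

lemma indep : M.Indep ↑T := by
  refine M.indep_of_forall_notMem_closure hT.injOn fun t ht =>
    ⟨M.closure_subset_ground _ (hT.subset_closure ht), ?_⟩
  have ht1 := (mem_Icc.mp (hT.layer_mem_Icc ht)).1
  refine fun hcl => notMem_flagFlat_of_lt_layer (Nat.sub_one_lt_of_lt ht1)
    (M.closure_subset_closure_of_subset_closure (fun s hs => ?_) hcl)
  simp only [coe_filter, Set.mem_ofPred_eq] at hs
  exact flagFlat_mono (Nat.le_sub_one_of_lt hs.2)
    (mem_flagFlat_layer_of_pos (mem_Icc.mp (hT.layer_mem_Icc hs.1)).1)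

end IsFlagTransversal

lemma IsFlagTransversal.erase_of_layer_eq {U : Finset (Fin n)} {i j : Fin n}
    (hT : IsFlagTransversal M X (U.erase i)) (hi : i ∈ U) (hj : j ∈ U.erase i)
    (hij : layer M X j = layer M X i) : IsFlagTransversal M X (U.erase j) := by
  have hji : j ≠ i := ne_of_mem_erase hj
  refine ⟨?_, ?_⟩
  · rw [card_erase_of_mem (mem_of_mem_erase hj), ← hT.1, card_erase_of_mem hi]
  · have hU : U.erase j = insert i ((U.erase i).erase j) := by
      rw [erase_right_comm, insert_erase (mem_erase.mpr ⟨hji.symm, hi⟩)]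
    rw [← hT.2, hU, image_insert, ← hij, ← image_insert, insert_erase hj]

lemma IsFlagTransversal.layer_mem_Icc_of_isCircuit {C U : Finset (Fin n)} {i : Fin n}
    (hT : IsFlagTransversal M X (U.erase i)) (hC : IsCircuit M C) (hC1 : 1 < #C) (hCU : C ⊆ U) :
    layer M X i ∈ Icc 1 #X := by
  have hiC : i ∈ C := by
    by_contra h
    exact hC.not_indep_of_subset (fun c hc => mem_erase.mpr ⟨ne_of_mem_of_not_mem hc h, hCU hc⟩)
      hT.indep
  have hCc := isCircuit_iff_isCircuit_coe.mp hC
  have hcl : i ∈ M.closure ↑X := by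
    refine M.closure_subset_closure_of_subset_closure hT.subset_closure
      (M.closure_subset_closure ?_ (hCc.mem_closure_sdiff_singleton_of_mem hiC))
    rw [coe_erase]
    exact Set.sdiff_subset_sdiff_left (coe_subset.mpr hCU)
  have hloop : i ∉ M.closure ∅ := fun h => by
    have hsingle := Matroid.singleton_isCircuit.mpr h
    have := hsingle.eq_of_subset_isCircuit hCc (by simpa using hiC)
    rw [← coe_singleton, coe_inj] at this
    simp [← this] at hC1
  exact layer_mem_Icc_of_mem_closure hcl hloop

end Flag

section FlagFunctional

variable {n : ℕ} {K : Type*} [Field K] (β : Fin n → Fin n → K) (M : Matroid (Fin n))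
  (χ : Finset (Fin n) → K) (X : Finset (Fin n))

open Classical in
noncomputable def flagWeight (T : Finset (Fin n)) : K :=
  if IsFlagTransversal M X T then (-1) ^ inversions (layer M X) T * (χ T)⁻¹ else 0

noncomputable def flagFunctional : EAlg n K β →ₗ[K] K :=
  Finsupp.linearCombination K (flagWeight M χ X) ∘ₗ
    LinearMap.applyₗ (Finsupp.single ∅ 1) ∘ₗ (coordRep β).toLinearMap

variable {β M χ X}

lemma flagFunctional_eset (T : Finset (Fin n)) :
    flagFunctional β M χ X (eset β T) = flagWeight M χ X T := by
  simp [flagFunctional, coordRep_eset]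

lemma flagWeight_eq_zero_of_not_indep {T : Finset (Fin n)} (hT : ¬ M.Indep ↑T) :
    flagWeight M χ X T = 0 :=
  if_neg fun h => hT h.indep

lemma flagWeight_self_ne_zero (h1 : UC1 M χ) (hX : M.Indep ↑X) : flagWeight M χ X X ≠ 0 := by
  rw [flagWeight, if_pos (isFlagTransversal_self hX)]
  exact mul_ne_zero (pow_ne_zero _ (neg_ne_zero.mpr one_ne_zero)) (inv_ne_zero ((h1 X).mpr hX))

end FlagFunctional

section Vanishing

variable {n : ℕ} {K : Type*} [Field K] {β : Fin n → Fin n → K} {M : Matroid (Fin n)}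
  {χ : Finset (Fin n) → K} {X : Finset (Fin n)}

lemma flagFunctional_bdry_eq_zero (h1 : UC1 M χ) {C U : Finset (Fin n)} (hC : IsCircuit M C)
    (hC1 : 1 < #C) (hCU : C ⊆ U) : flagFunctional β M χ X (bdry β χ U) = 0 := by
  simp only [bdry_eq_sum, map_sum, map_smul, flagFunctional_eset, smul_eq_mul]
  by_cases hex : ∃ i₀ ∈ U, IsFlagTransversal M X (U.erase i₀)
  swap
  · push Not at hex
    exact sum_eq_zero fun i hi => by rw [flagWeight, if_neg (hex i hi), mul_zero]
  obtain ⟨i₀, hi₀U, hT₀⟩ := hex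
  obtain ⟨j, hj, hlay⟩ := mem_image.mp (hT₀.2 ▸ hT₀.layer_mem_Icc_of_isCircuit hC hC1 hCU)
  have hji₀ : j ≠ i₀ := ne_of_mem_erase hj
  have hjU : j ∈ U := mem_of_mem_erase hj
  have hT₁ := hT₀.erase_of_layer_eq hi₀U hj hlay
  have hunique : ∀ w ∈ U, w ≠ i₀ → w ≠ j → layer M X w ≠ layer M X i₀ := fun w hw hw₀ hwj h =>
    hwj (hT₀.injOn (mem_erase.mpr ⟨hw₀, hw⟩) hj (h.trans hlay.symm))
  have hterm : ∀ i ∈ U, IsFlagTransversal M X (U.erase i) →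
      (-1) ^ (#{k ∈ U | k < i} + 1) * χ (U.erase i) * flagWeight M χ X (U.erase i) =
        -(-1) ^ (#{k ∈ U | k < i} + inversions (layer M X) (U.erase i)) := fun i _ hT => by
    have hχ : χ (U.erase i) ≠ 0 := (h1 _).mpr hT.indep
    rw [flagWeight, if_pos hT]
    field_simp
    ring
  rw [sum_eq_add i₀ j hji₀.symm (fun i hi ⟨hi₀, hij⟩ => ?_) (absurd hi₀U) (absurd hjU),
    hterm i₀ hi₀U hT₀, hterm j hjU hT₁,
    neg_one_pow_inversions_erase _ hi₀U hjU hji₀.symm hlay.symm hunique, neg_neg, add_neg_cancel]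
  rw [flagWeight, if_neg fun hT => hji₀ (hT.injOn (mem_erase.mpr ⟨hij.symm, hjU⟩)
    (mem_erase.mpr ⟨hi₀.symm, hi₀U⟩) hlay), mul_zero]

lemma flagFunctional_bdry_mul_eset (hE : M.E = Set.univ)
    (hβ : ∀ i j : Fin n, i < j → β i j ≠ 0) (h1 : UC1 M χ) (h2 : UC2 β M χ)
    {C : Finset (Fin n)} (hC : IsCircuit M C) (hC1 : 1 < #C) (S : Finset (Fin n)) :
    flagFunctional β M χ X (bdry β χ C * eset β S) = 0 := by
  by_cases hU : ∃ i ∈ C, Disjoint C S ∧ M.Indep ↑((C ∪ S).erase i)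
  · obtain ⟨i, -, hCS, hI⟩ := hU
    obtain ⟨ε, hε, hεU⟩ := h2 _ _ (unidep_of_indep_erase (by simp [hE]) hC subset_union_left hI)
      hC.unidep subset_union_left
    have := flagFunctional_bdry_eq_zero (β := β) (X := X) h1 hC hC1 (subset_union_left (s₂ := S))
    rw [hεU, union_sdiff_cancel_left hCS, map_smul, smul_eq_mul] at this
    exact (mul_eq_zero.mp this).resolve_left hε
  · push Not at hU
    rw [bdry_eq_sum, sum_mul, map_sum]
    refine sum_eq_zero fun i hi => ?_
    obtain ⟨c, hc, hmul⟩ := eset_mul_eset hβ (C.erase i) S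
    rw [smul_mul_assoc, hmul, map_smul, map_smul, flagFunctional_eset, smul_eq_mul, smul_eq_mul]
    by_cases hc0 : c = 0
    · simp [hc0]
    rw [flagWeight_eq_zero_of_not_indep, mul_zero, mul_zero]
    have hdisj := hc.mp hc0
    by_cases hiS : i ∈ S
    · exact hC.not_indep_of_subset fun c hc => by
        by_cases h : c = i
        · exact mem_union_right _ (h ▸ hiS)
        · exact mem_union_left _ (mem_erase.mpr ⟨h, hc⟩)
    · have hCS : Disjoint C S := by
        rw [← insert_erase hi, disjoint_insert_left]
        exact ⟨hiS, hdisj⟩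
      rw [← erase_eq_of_notMem hiS, ← erase_union_distrib]
      exact hU i hi hCS

lemma flagFunctional_gen_mul_eset {i : Fin n} (hi : IsCircuit M {i}) (S : Finset (Fin n)) :
    flagFunctional β M χ X (gen β i * eset β S) = 0 := by
  rw [gen_mul_eset]
  split_ifs with hiS
  · simp
  · rw [map_smul, flagFunctional_eset, flagWeight_eq_zero_of_not_indep
      (hi.not_indep_of_subset (by simp)), smul_zero]

lemma flagFunctional_eq_zero_of_mem_chiIdeal (hE : M.E = Set.univ)
    (hβ : ∀ i j : Fin n, i < j → β i j ≠ 0) (h1 : UC1 M χ) (h2 : UC2 β M χ) {z : EAlg n K β}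
    (hz : z ∈ chiIdeal β M χ) : flagFunctional β M χ X z = 0 := by
  refine (Submodule.span_le (p := LinearMap.ker (flagFunctional β M χ X))).mpr ?_ hz
  rintro _ (⟨C, hC, hC1, w, rfl⟩ | ⟨i, hi, w, rfl⟩)
  · exact map_mul_eq_zero_of_forall_eset β _ (flagFunctional_bdry_mul_eset hE hβ h1 h2 hC hC1) w
  · exact map_mul_eq_zero_of_forall_eset β _ (flagFunctional_gen_mul_eset hi) w

end Vanishing

section Dependent

variable {n : ℕ} {K : Type*} [Field K] {β : Fin n → Fin n → K} {M : Matroid (Fin n)}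
  {χ : Finset (Fin n) → K}

lemma bdry_mul_eset_singleton (hβ : ∀ i j : Fin n, i < j → β i j ≠ 0) (h1 : UC1 M χ)
    {C : Finset (Fin n)} (hC : IsCircuit M C) {a : Fin n} (ha : a ∈ C) :
    ∃ δ : K, δ ≠ 0 ∧ bdry β χ C * eset β {a} = δ • eset β C := by
  obtain ⟨c, hc, hmul⟩ := eset_mul_eset hβ (C.erase a) {a}
  rw [union_singleton, insert_erase ha] at hmul
  refine ⟨(-1) ^ (#{j ∈ C | j < a} + 1) * χ (C.erase a) * c, ?_, ?_⟩
  · exact mul_ne_zero (mul_ne_zero (pow_ne_zero _ (neg_ne_zero.mpr one_ne_zero))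
      ((h1 _).mpr (hC.indep_erase ha))) (hc.mpr (by simp))
  rw [bdry_eq_sum, sum_mul, sum_eq_single a, smul_mul_assoc, hmul, smul_smul]
  · intro i hi hia
    obtain ⟨c', hc', hmul'⟩ := eset_mul_eset hβ (C.erase i) {a}
    have hc'0 : c' = 0 := not_ne_iff.mp fun h => hia (by simpa [ha] using hc'.mp h : a = i).symm
    rw [smul_mul_assoc, hmul', hc'0, zero_smul, smul_zero]
  · exact fun h => absurd ha h

lemma eset_mem_chiIdeal (hE : M.E = Set.univ) (hβ : ∀ i j : Fin n, i < j → β i j ≠ 0)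
    (h1 : UC1 M χ) {X : Finset (Fin n)} (hX : ¬ M.Indep ↑X) : eset β X ∈ chiIdeal β M χ := by
  obtain ⟨C, hCX, hC⟩ := exists_isCircuit_subset hE hX
  obtain ⟨a, haC⟩ := coe_nonempty.mp (isCircuit_iff_isCircuit_coe.mp hC).nonempty
  rcases (one_le_card.mpr ⟨a, haC⟩).eq_or_lt with hC1 | hC1
  · obtain ⟨i, rfl⟩ := card_eq_one.mp hC1.symm
    obtain ⟨c, hc, hmul⟩ := eset_mul_eset hβ {i} (X.erase i)
    rw [singleton_union, insert_erase (hCX (mem_singleton_self i)), eset_singleton] at hmul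
    rw [← inv_smul_smul₀ (hc.mpr (by simp)) (eset β X), ← hmul]
    exact Submodule.smul_mem _ _ (Submodule.subset_span (Or.inr ⟨i, hC, _, rfl⟩))
  · obtain ⟨δ, hδ, hbdry⟩ := bdry_mul_eset_singleton hβ h1 hC haC
    obtain ⟨c, hc, hmul⟩ := eset_mul_eset hβ C (X \ C)
    rw [union_sdiff_of_subset hCX] at hmul
    have hprod : bdry β χ C * (eset β {a} * eset β (X \ C)) = (δ * c) • eset β X := by
      rw [← mul_assoc, hbdry, smul_mul_assoc, hmul, smul_smul]
    rw [← inv_smul_smul₀ (mul_ne_zero hδ (hc.mpr disjoint_sdiff)) (eset β X), ← hprod]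
    exact Submodule.smul_mem _ _ (Submodule.subset_span (Or.inl ⟨C, hC, hC1, _, rfl⟩))

end Dependent

/-- in a χ-algebra, `[e_X] ≠ 0` iff `X` is independent. -/
theorem cls_ne_zero_iff {n : ℕ} {K : Type*} [Field K] (β : Fin n → Fin n → K)
    (hβ : ∀ i j : Fin n, i < j → β i j ≠ 0)
    (M : Matroid (Fin n)) (hE : M.E = Set.univ)
    (χ : Finset (Fin n) → K) (h1 : UC1 M χ) (h2 : UC2 β M χ)
    (X : Finset (Fin n)) :
    cls β M χ X ≠ 0 ↔ M.Indep ↑X := by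
  refine ⟨fun hne => by_contra fun hX => hne ?_, fun hX h0 => ?_⟩
  · exact (Submodule.Quotient.mk_eq_zero _).mpr (eset_mem_chiIdeal hE hβ h1 hX)
  · have := flagFunctional_eq_zero_of_mem_chiIdeal hE hβ h1 h2 (X := X)
      ((Submodule.Quotient.mk_eq_zero _).mp h0)
    exact flagWeight_self_ne_zero h1 hX (by rwa [flagFunctional_eset] at this)
end
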